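/- arXiv:2506.07604 — 6 statements merged into one kernel-verified Lean document; each statement's English description precedes it below -/
import Mathlib

section
/- If û(ζ, t₁) ≠ 0 for some frequency ζ and times 0 < t₁ < t₂, then (2π)^{d/2}/(t₂-t₁) · log|û(ζ,t₂)/û(ζ,t₁)| = -∑_{|α| even, |α|≤n} c_α ζ^α, where c_α = p_α i^{|α|} ∈ ℝ for even |α|. That is, the modulus ratio of Fourier modes at two times determines the value of the real polynomial formed by the even-order coefficients at ζ. -/
open Finset

/-- The finite set of multi-indices `α : Fin d → ℕ` with `|α| = ∑ α i ≤ n`. -/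
def multiIdx (d n : ℕ) : Finset (Fin d → ℕ) :=
  (Fintype.piFinset fun _ => Finset.range (n + 1)).filter fun α => ∑ i, α i ≤ n

/-- The symbol `(2π)^{-d/2} ∑_{|α| ≤ n} p_α (iζ)^α`. -/
noncomputable def pdeSymbol (d n : ℕ) (p : (Fin d → ℕ) → ℝ) (ζ : Fin d → ℝ) : ℂ :=
  (((2 * Real.pi) ^ (-(d : ℝ) / 2) : ℝ) : ℂ) *
    ∑ α ∈ multiIdx d n, (p α : ℂ) * ∏ i, (Complex.I * (ζ i : ℂ)) ^ (α i)

/-!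
The ratio `v t₂ / v t₁` is `exp (-S (t₂ - t₁))` for the symbol `S`, so its log-modulus is
`-(t₂ - t₁) Re S`. Writing `(iζ)^α = i^{|α|} ζ^α`, the real part of `i^{|α|}` is `(-1)^{|α|/2}` for
even `|α|` and `0` for odd `|α|`, so `Re S` is `(2π)^{-d/2}` times the even part of the symbol.
-/

namespace Complex

lemma I_pow_eq_neg_one_pow_mul (k : ℕ) : I ^ k = (-1) ^ (k / 2) * I ^ (k % 2) := by
  conv_lhs => rw [← Nat.div_add_mod k 2, pow_add, pow_mul, I_sq]

lemma re_I_pow_mul_ofReal (k : ℕ) (c : ℝ) :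
    (I ^ k * c).re = if Even k then (-1) ^ (k / 2) * c else 0 := by
  have hsign : ((-1 : ℂ) ^ (k / 2)) = ((-1 : ℝ) ^ (k / 2) : ℝ) := by push_cast; rfl
  rw [I_pow_eq_neg_one_pow_mul, hsign]
  rcases Nat.even_or_odd k with hk | hk
  · rw [Nat.even_iff.mp hk, if_pos hk, pow_zero, mul_one, ← ofReal_mul, ofReal_re]
  · rw [Nat.odd_iff.mp hk, if_neg (Nat.not_even_iff_odd.mpr hk), pow_one, mul_right_comm,
      ← ofReal_mul, re_ofReal_mul, I_re, mul_zero]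

end Complex

lemma Finset.prod_mul_pow_eq_pow_sum_mul {ι M : Type*} [CommMonoid M] (s : Finset ι) (a : M)
    (f : ι → M) (k : ι → ℕ) :
    ∏ i ∈ s, (a * f i) ^ k i = a ^ (∑ i ∈ s, k i) * ∏ i ∈ s, f i ^ k i := by
  rw [← prod_pow_eq_pow_sum, ← prod_mul_distrib]
  exact prod_congr rfl fun i _ => mul_pow _ _ _

/-- `∑_{|α| even} c_α ζ^α` with `c_α = p_α i^{|α|} = p_α (-1)^{|α|/2}`. -/
def evenSymbol (d n : ℕ) (p : (Fin d → ℕ) → ℝ) (ζ : Fin d → ℝ) : ℝ :=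
  ∑ α ∈ (multiIdx d n).filter (fun α => Even (∑ i, α i)),
    (p α * (-1 : ℝ) ^ ((∑ i, α i) / 2)) * ∏ i, (ζ i) ^ (α i)

lemma re_pdeSymbol (d n : ℕ) (p : (Fin d → ℕ) → ℝ) (ζ : Fin d → ℝ) :
    (pdeSymbol d n p ζ).re = (2 * Real.pi) ^ (-(d : ℝ) / 2) * evenSymbol d n p ζ := by
  rw [pdeSymbol, evenSymbol, Complex.re_ofReal_mul, Complex.re_sum, sum_filter]
  congr 1
  refine sum_congr rfl fun α _ => ?_
  have hreal : (p α : ℂ) * ∏ i, (ζ i : ℂ) ^ α i = ((p α * ∏ i, ζ i ^ α i : ℝ) : ℂ) := by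
    push_cast; rfl
  rw [prod_mul_pow_eq_pow_sum_mul, mul_left_comm, hreal, Complex.re_I_pow_mul_ofReal]
  split_ifs <;> ring

lemma log_norm_div_eq_of_eq_mul_exp {v : ℝ → ℂ} {S : ℂ}
    (hv : ∀ t : ℝ, v t = v 0 * Complex.exp (-S * t)) {t₁ : ℝ} (hne : v t₁ ≠ 0) (t₂ : ℝ) :
    Real.log ‖v t₂ / v t₁‖ = -S.re * (t₂ - t₁) := by
  have hv0 : v 0 ≠ 0 := fun h => hne (by rw [hv t₁, h, zero_mul])
  have hratio : v t₂ / v t₁ = Complex.exp (-S * ((t₂ - t₁ : ℝ) : ℂ)) := by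
    rw [hv t₂, hv t₁, mul_div_mul_left _ _ hv0, ← Complex.exp_sub]
    push_cast
    ring_nf
  rw [hratio, Complex.norm_exp, Real.log_exp, mul_comm, Complex.re_ofReal_mul, Complex.neg_re,
    mul_comm]

theorem stmt1_general (d n : ℕ) (p : (Fin d → ℕ) → ℝ) (ζ : Fin d → ℝ)
    (v : ℝ → ℂ)
    (hv : ∀ t : ℝ, v t = v 0 * Complex.exp (-(pdeSymbol d n p ζ) * t))
    (t₁ t₂ : ℝ) (h12 : t₁ < t₂) (hne : v t₁ ≠ 0) :
    (2 * Real.pi) ^ ((d : ℝ) / 2) / (t₂ - t₁) *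
        Real.log (‖v t₂ / v t₁‖)
      = -∑ α ∈ (multiIdx d n).filter (fun α => Even (∑ i, α i)),
          (p α * (-1 : ℝ) ^ ((∑ i, α i) / 2)) * ∏ i, (ζ i) ^ (α i) := by
  have hdt : t₂ - t₁ ≠ 0 := sub_ne_zero.mpr h12.ne'
  have hcancel : (2 * Real.pi) ^ ((d : ℝ) / 2) * (2 * Real.pi) ^ (-(d : ℝ) / 2) = 1 := by
    rw [← Real.rpow_add Real.two_pi_pos, neg_div, add_neg_cancel, Real.rpow_zero]
  change _ = -evenSymbol d n p ζ
  rw [log_norm_div_eq_of_eq_mul_exp hv hne, re_pdeSymbol]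
  calc _ = -((2 * Real.pi) ^ ((d : ℝ) / 2) * (2 * Real.pi) ^ (-(d : ℝ) / 2)) *
        evenSymbol d n p ζ := by field_simp
    _ = -evenSymbol d n p ζ := by rw [hcancel, neg_one_mul]

/-- if `û(ζ,t) = û(ζ,0) exp(-(2π)^{-d/2} ∑ p_α (iζ)^α t)` and `û(ζ,t₁) ≠ 0`
for `0 < t₁ < t₂`, then
`(2π)^{d/2}/(t₂-t₁) · log|û(ζ,t₂)/û(ζ,t₁)| = -∑_{|α| even} c_α ζ^α`
with `c_α = p_α i^{|α|} = p_α (-1)^{|α|/2} ∈ ℝ`. -/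
theorem stmt1 (d n : ℕ) (p : (Fin d → ℕ) → ℝ) (ζ : Fin d → ℝ)
    (v : ℝ → ℂ)
    (hv : ∀ t : ℝ, v t = v 0 * Complex.exp (-(pdeSymbol d n p ζ) * t))
    (t₁ t₂ : ℝ) (h1 : 0 < t₁) (h12 : t₁ < t₂) (hne : v t₁ ≠ 0) :
    (2 * Real.pi) ^ ((d : ℝ) / 2) / (t₂ - t₁) *
        Real.log (‖v t₂ / v t₁‖)
      = -∑ α ∈ (multiIdx d n).filter (fun α => Even (∑ i, α i)),
          (p α * (-1 : ℝ) ^ ((∑ i, α i) / 2)) * ∏ i, (ζ i) ^ (α i) :=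
  stmt1_general d n p ζ v hv t₁ t₂ h12 hne
end

section
/- If every column of the matrix F ∈ ℝ^{m×N} is nonzero and F has mutual coherence μ(F) satisfying (2k-1)·μ(F) < 1, then any vector c with at most k nonzero entries is the unique solution of the ℓ⁰ minimization problem min ‖x‖₀ subject to Fx = Fc. -/
noncomputable def l0norm {N : ℕ} (x : Fin N → ℝ) : ℕ := Set.ncard {j | x j ≠ 0}

lemma l0norm_eq {N : ℕ} (x : Fin N → ℝ) [DecidablePred fun j => x j ≠ 0] :
    l0norm x = (Finset.univ.filter fun j => x j ≠ 0).card := by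
  rw [l0norm, Set.ncard_eq_toFinset_card']
  congr 1
  ext j
  simp

/-- if every column of `F` is nonzero and the mutual coherence `μ(F)` satisfies
`(2k-1)·μ(F) < 1`, then any `c` with at most `k` nonzero entries is the unique solution of
`min ‖x‖₀ subject to Fx = Fc`: every other solution has strictly larger ℓ⁰ norm. -/
theorem stmt3 (m N k : ℕ) (F : Matrix (Fin m) (Fin N) ℝ) (μ : ℝ)
    (hcol : ∀ j, (fun i => F i j) ≠ 0)
    (hμ : ∀ j l, j ≠ l →
      |∑ i, F i j * F i l| /
        (Real.sqrt (∑ i, (F i j) ^ 2) * Real.sqrt (∑ i, (F i l) ^ 2)) ≤ μ)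
    (hk : (2 * (k : ℝ) - 1) * μ < 1)
    (c : Fin N → ℝ) (hc : l0norm c ≤ k) :
    ∀ x : Fin N → ℝ, F.mulVec x = F.mulVec c → x ≠ c → l0norm c < l0norm x := by
  classical
  intro x hFx hxc
  by_contra hle
  push_neg at hle
  set v : Fin N → ℝ := x - c with hv
  have hv0 : v ≠ 0 := sub_ne_zero.mpr hxc
  have hFv : F.mulVec v = 0 := by
    rw [hv, Matrix.mulVec_sub, hFx, sub_self]
  set S : Finset (Fin N) := Finset.univ.filter (fun j => v j ≠ 0) with hS
  -- card bound
  have hScard : S.card ≤ 2 * k := by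
    have hsub : S ⊆ (Finset.univ.filter fun j => x j ≠ 0) ∪
        (Finset.univ.filter fun j => c j ≠ 0) := by
      intro j hj
      simp only [hS, Finset.mem_filter, Finset.mem_univ, true_and] at hj
      simp only [Finset.mem_union, Finset.mem_filter, Finset.mem_univ, true_and]
      by_contra h
      push_neg at h
      exact hj (by simp [hv, h.1, h.2])
    calc S.card ≤ _ := Finset.card_le_card hsub
      _ ≤ (Finset.univ.filter fun j => x j ≠ 0).card
          + (Finset.univ.filter fun j => c j ≠ 0).card := Finset.card_union_le _ _
      _ = l0norm x + l0norm c := by rw [l0norm_eq, l0norm_eq]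
      _ ≤ k + k := add_le_add (le_trans hle hc) hc
      _ = 2 * k := (two_mul k).symm
  -- column norms
  set n : Fin N → ℝ := fun j => Real.sqrt (∑ i, (F i j) ^ 2) with hn
  have hnpos : ∀ j, 0 < n j := by
    intro j
    apply Real.sqrt_pos.mpr
    obtain ⟨i, hi⟩ : ∃ i, F i j ≠ 0 := by
      by_contra h
      push_neg at h
      exact hcol j (funext h)
    exact Finset.sum_pos' (fun i _ => sq_nonneg _) ⟨i, Finset.mem_univ i, by positivity⟩
  have hnsq : ∀ j, (n j) ^ 2 = ∑ i, (F i j) ^ 2 := fun j =>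
    Real.sq_sqrt (Finset.sum_nonneg fun i _ => sq_nonneg _)
  -- Gram identity
  have key : ∀ j₀ : Fin N, v j₀ * (n j₀) ^ 2
      = -∑ j ∈ Finset.univ.erase j₀, v j * (∑ i, F i j * F i j₀) := by
    intro j₀
    have h0 : ∑ j, v j * (∑ i, F i j * F i j₀) = 0 := by
      calc ∑ j, v j * (∑ i, F i j * F i j₀)
          = ∑ j, ∑ i, F i j * v j * F i j₀ := by
            apply Finset.sum_congr rfl
            intro j _
            rw [Finset.mul_sum]
            exact Finset.sum_congr rfl fun i _ => by ring
        _ = ∑ i, ∑ j, F i j * v j * F i j₀ := Finset.sum_comm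
        _ = ∑ i, (F.mulVec v i) * F i j₀ := by
            apply Finset.sum_congr rfl
            intro i _
            simp [Matrix.mulVec, dotProduct, Finset.sum_mul]
        _ = 0 := by rw [hFv]; simp
    have hsplit := Finset.add_sum_erase Finset.univ
      (fun j => v j * (∑ i, F i j * F i j₀)) (Finset.mem_univ j₀)
    have : v j₀ * (∑ i, F i j₀ * F i j₀)
        + ∑ j ∈ Finset.univ.erase j₀, v j * (∑ i, F i j * F i j₀) = 0 := by
      rw [hsplit, h0]
    have h2 : v j₀ * (∑ i, F i j₀ * F i j₀) = v j₀ * (n j₀) ^ 2 := by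
      rw [hnsq]
      congr 1
      exact Finset.sum_congr rfl fun i _ => (sq (F i j₀)).symm ▸ by ring
    linarith [this, h2]
  -- pick maximizer
  have hSne : S.Nonempty := by
    obtain ⟨j, hj⟩ := Function.ne_iff.mp hv0
    exact ⟨j, by simp only [hS, Finset.mem_filter, Finset.mem_univ, true_and]; simpa using hj⟩
  obtain ⟨j₀, hj₀S, hmax⟩ := S.exists_max_image (fun j => |v j| * n j) hSne
  have hvj₀ : v j₀ ≠ 0 := by
    simpa [hS] using hj₀S
  set M : ℝ := |v j₀| * n j₀ with hM
  have hMpos : 0 < M := mul_pos (abs_pos.mpr hvj₀) (hnpos j₀)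
  have hfmax : ∀ j, |v j| * n j ≤ M := by
    intro j
    by_cases hj : j ∈ S
    · exact hmax j hj
    · have : v j = 0 := by simpa [hS] using hj
      rw [this]
      simp [hMpos.le]
  -- the coherence bound per term
  have hG : ∀ j, j ≠ j₀ → |∑ i, F i j * F i j₀| ≤ μ * (n j * n j₀) := by
    intro j hj
    have := hμ j j₀ hj
    rw [div_le_iff₀ (mul_pos (hnpos j) (hnpos j₀))] at this
    linarith
  set T : ℝ := ∑ j ∈ Finset.univ.erase j₀, |v j| * n j with hT
  have hTnonneg : 0 ≤ T :=
    Finset.sum_nonneg fun j _ => mul_nonneg (abs_nonneg _) (hnpos j).le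
  -- M ≤ μ * T
  have hMT : M * n j₀ ≤ (μ * T) * n j₀ := by
    have h1 : |v j₀| * (n j₀) ^ 2 ≤ ∑ j ∈ Finset.univ.erase j₀,
        |v j| * (μ * (n j * n j₀)) := by
      calc |v j₀| * (n j₀) ^ 2 = |v j₀ * (n j₀) ^ 2| := by
            rw [abs_mul, abs_of_nonneg (sq_nonneg (n j₀))]
        _ = |∑ j ∈ Finset.univ.erase j₀, v j * (∑ i, F i j * F i j₀)| := by
            rw [key j₀, abs_neg]
        _ ≤ ∑ j ∈ Finset.univ.erase j₀, |v j * (∑ i, F i j * F i j₀)| :=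
            Finset.abs_sum_le_sum_abs _ _
        _ ≤ ∑ j ∈ Finset.univ.erase j₀, |v j| * (μ * (n j * n j₀)) := by
            apply Finset.sum_le_sum
            intro j hj
            rw [abs_mul]
            exact mul_le_mul_of_nonneg_left (hG j (Finset.ne_of_mem_erase hj))
              (abs_nonneg _)
    have h2 : ∑ j ∈ Finset.univ.erase j₀, |v j| * (μ * (n j * n j₀))
        = (μ * T) * n j₀ := by
      rw [hT, Finset.mul_sum, Finset.sum_mul]
      exact Finset.sum_congr rfl fun j _ => by ring
    calc M * n j₀ = |v j₀| * (n j₀) ^ 2 := by rw [hM]; ring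
      _ ≤ _ := h1
      _ = _ := h2
  have hMμT : M ≤ μ * T := le_of_mul_le_mul_right hMT (hnpos j₀)
  -- T ≤ (S.card - 1) * M
  have hTbound : T ≤ ((S.card : ℝ) - 1) * M := by
    have hsub : S.erase j₀ ⊆ Finset.univ.erase j₀ := by
      intro j hj
      exact Finset.mem_erase.mpr ⟨(Finset.mem_erase.mp hj).1, Finset.mem_univ j⟩
    have hTeq : T = ∑ j ∈ S.erase j₀, |v j| * n j := by
      rw [hT]
      symm
      apply Finset.sum_subset hsub
      intro j hj hjn
      have hjne : j ≠ j₀ := (Finset.mem_erase.mp hj).1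
      have : j ∉ S := fun h => hjn (Finset.mem_erase.mpr ⟨hjne, h⟩)
      have : v j = 0 := by simpa [hS] using this
      rw [this]; simp
    rw [hTeq]
    calc ∑ j ∈ S.erase j₀, |v j| * n j ≤ (S.erase j₀).card • M :=
          Finset.sum_le_card_nsmul _ _ M (fun j _ => hfmax j)
      _ = ((S.erase j₀).card : ℝ) * M := by rw [nsmul_eq_mul]
      _ = ((S.card : ℝ) - 1) * M := by
          rw [Finset.card_erase_of_mem hj₀S]
          congr 1
          have h1 : 1 ≤ S.card := Finset.card_pos.mpr ⟨j₀, hj₀S⟩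
          push_cast [Nat.cast_sub h1]
          ring
  -- conclude
  rcases le_or_gt μ 0 with hμ0 | hμ0
  · have : μ * T ≤ 0 := mul_nonpos_of_nonpos_of_nonneg hμ0 hTnonneg
    linarith
  · have hs2k : (S.card : ℝ) - 1 ≤ 2 * (k : ℝ) - 1 := by
      have : (S.card : ℝ) ≤ 2 * k := by exact_mod_cast hScard
      linarith
    have : μ * T ≤ μ * (((S.card : ℝ) - 1) * M) :=
      mul_le_mul_of_nonneg_left hTbound hμ0.le
    have h3 : μ * (((S.card : ℝ) - 1) * M) ≤ (2 * (k : ℝ) - 1) * μ * M := by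
      have h1 : 1 ≤ S.card := Finset.card_pos.mpr ⟨j₀, hj₀S⟩
      have hcard1 : (0:ℝ) ≤ (S.card : ℝ) - 1 := by
        have : (1:ℝ) ≤ S.card := by exact_mod_cast h1
        linarith
      have h := mul_le_mul_of_nonneg_right
        (mul_le_mul_of_nonneg_left hs2k hμ0.le) hMpos.le
      nlinarith [h]
    have h4 : (2 * (k : ℝ) - 1) * μ * M < 1 * M :=
      mul_lt_mul_of_pos_right hk hMpos
    linarith
end

section
/- Let F have unit-norm columns and mutual coherence μ, let c* be supported on a set S of size k with (2k-1)μ < 1, and let b = Fc* + e with ‖e‖₂ ≤ ε. Then the least-squares solution restricted to S, ĉ_S = (F_S^T F_S)^{-1} F_S^T b, satisfies ‖ĉ_S - c*_S‖₂ ≤ ε / √(1 - (k-1)μ). -/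
/-!
Put `d = ĉ_S - c*_S`, so that the normal equations give `(F_Sᵀ F_S) d = F_Sᵀ e`. Then
`‖F_S d‖² = ⟪d, F_Sᵀ F_S d⟫ = ⟪F_S d, e⟫`, hence `‖F_S d‖ ≤ ‖e‖` (the least-squares fit of `e`
cannot be longer than `e`). On the other side the Gram matrix has unit diagonal and off-diagonal
entries at most `μ`, and bounding each off-diagonal term by AM-GM gives the Gershgorin-type
estimate `(1 - (k-1)μ) ‖d‖² ≤ ⟪d, F_Sᵀ F_S d⟫ = ‖F_S d‖² ≤ ε²`.
-/

open Matrix Finset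

section Coherence

variable {n : Type*} [Fintype n] [DecidableEq n]

lemma abs_dotProduct_mulVec_le_of_offDiag {M : Matrix n n ℝ} {μ : ℝ}
    (hdiag : ∀ i, M i i = 0) (hoff : ∀ i j, i ≠ j → |M i j| ≤ μ) (x : n → ℝ) :
    |x ⬝ᵥ M *ᵥ x| ≤ (Fintype.card n - 1) * μ * (x ⬝ᵥ x) := by
  have hterm : ∀ i j, |x i * M i j * x j| ≤
      μ * ((x i ^ 2 + x j ^ 2) / 2 - if i = j then x i ^ 2 else 0) := by
    intro i j
    by_cases hij : i = j
    · subst hij; simp [hdiag]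
    · rw [if_neg hij, sub_zero, abs_mul, abs_mul, mul_right_comm]
      have hx : |x i| * |x j| ≤ (x i ^ 2 + x j ^ 2) / 2 := by
        nlinarith [sq_nonneg (|x i| - |x j|), sq_abs (x i), sq_abs (x j)]
      calc |x i| * |x j| * |M i j| ≤ (x i ^ 2 + x j ^ 2) / 2 * μ :=
            mul_le_mul hx (hoff i j hij) (abs_nonneg _) (by positivity)
        _ = _ := mul_comm _ _
  have hsum : ∑ i, ∑ j, ((x i ^ 2 + x j ^ 2) / 2 - if i = j then x i ^ 2 else 0)
      = (Fintype.card n - 1) * (x ⬝ᵥ x) := by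
    simp only [Finset.sum_sub_distrib, Finset.sum_ite_eq, Finset.mem_univ, if_true,
      ← Finset.sum_div, Finset.sum_add_distrib, Finset.sum_const, Finset.card_univ, nsmul_eq_mul,
      ← Finset.mul_sum, dotProduct, ← sq]
    ring
  calc |x ⬝ᵥ M *ᵥ x| = |∑ i, ∑ j, x i * M i j * x j| := by
        rw [dot_mulVec_eq_sum_sum, Finset.sum_comm]
    _ ≤ ∑ i, ∑ j, |x i * M i j * x j| := (Finset.abs_sum_le_sum_abs _ _).trans
        (Finset.sum_le_sum fun i _ => Finset.abs_sum_le_sum_abs _ _)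
    _ ≤ ∑ i, ∑ j, μ * ((x i ^ 2 + x j ^ 2) / 2 - if i = j then x i ^ 2 else 0) :=
        Finset.sum_le_sum fun i _ => Finset.sum_le_sum fun j _ => hterm i j
    _ = (Fintype.card n - 1) * μ * (x ⬝ᵥ x) := by
        simp only [← Finset.mul_sum, hsum]; ring

lemma mul_dotProduct_self_le_dotProduct_mulVec {G : Matrix n n ℝ} {μ : ℝ}
    (hdiag : ∀ i, G i i = 1) (hoff : ∀ i j, i ≠ j → |G i j| ≤ μ) (x : n → ℝ) :
    (1 - (Fintype.card n - 1) * μ) * (x ⬝ᵥ x) ≤ x ⬝ᵥ G *ᵥ x := by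
  have hM := abs_dotProduct_mulVec_le_of_offDiag (M := G - 1)
    (fun i => by simp [hdiag]) (fun i j hij => by simpa [one_apply_ne hij] using hoff i j hij) x
  have hsplit : x ⬝ᵥ G *ᵥ x = x ⬝ᵥ x + x ⬝ᵥ (G - 1) *ᵥ x := by
    rw [sub_mulVec, one_mulVec, dotProduct_sub]; ring
  rw [hsplit]
  linarith [neg_abs_le (x ⬝ᵥ (G - 1) *ᵥ x)]

lemma isUnit_det_of_mul_dotProduct_self_le {G : Matrix n n ℝ} {c : ℝ}
    (hc : 0 < c) (hG : ∀ x, c * (x ⬝ᵥ x) ≤ x ⬝ᵥ G *ᵥ x) : IsUnit G.det := by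
  refine isUnit_iff_ne_zero.mpr fun hdet => ?_
  obtain ⟨x, hx0, hx⟩ := exists_mulVec_eq_zero_iff.mpr hdet
  have : c * (x ⬝ᵥ x) ≤ 0 := by simpa [hx] using hG x
  exact hx0 <| dotProduct_self_eq_zero.mp <| le_antisymm (nonpos_of_mul_nonpos_right this hc)
    (by simpa using dotProduct_star_self_nonneg x)

end Coherence

section LeastSquares

variable {m n : Type*} [Fintype m] [Fintype n]

lemma dotProduct_transpose_mul_self_mulVec (A : Matrix m n ℝ) (x : n → ℝ) :
    x ⬝ᵥ (Aᵀ * A) *ᵥ x = A *ᵥ x ⬝ᵥ A *ᵥ x := by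
  rw [← mulVec_mulVec, dotProduct_mulVec, vecMul_transpose]

lemma dotProduct_self_mulVec_le_of_normal_eq {A : Matrix m n ℝ} {x : n → ℝ} {e : m → ℝ}
    (hx : (Aᵀ * A) *ᵥ x = Aᵀ *ᵥ e) : A *ᵥ x ⬝ᵥ A *ᵥ x ≤ e ⬝ᵥ e := by
  have hye : A *ᵥ x ⬝ᵥ A *ᵥ x = A *ᵥ x ⬝ᵥ e := by
    rw [← dotProduct_transpose_mul_self_mulVec, hx, dotProduct_mulVec, vecMul_transpose]
  have := dotProduct_star_self_nonneg (e - A *ᵥ x)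
  simp only [star_trivial, dotProduct_sub, sub_dotProduct, dotProduct_comm e] at this
  linarith

lemma transpose_mul_self_mulVec_leastSquares_sub [DecidableEq n] {A : Matrix m n ℝ}
    (hA : IsUnit (Aᵀ * A).det) (c : n → ℝ) (e : m → ℝ) :
    (Aᵀ * A) *ᵥ ((Aᵀ * A)⁻¹ *ᵥ Aᵀ *ᵥ (A *ᵥ c + e) - c) = Aᵀ *ᵥ e := by
  rw [mulVec_sub, mulVec_mulVec, mul_nonsing_inv _ hA, one_mulVec, mulVec_add, mulVec_mulVec,
    add_sub_cancel_left]

end LeastSquares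

/-- `F_S` has unit-norm columns with pairwise coherence at most `μ`,
`(2k-1)μ < 1`, `b = F_S c* + e` with `‖e‖₂ ≤ ε`; then the least-squares solution on `S`,
`ĉ_S = (F_Sᵀ F_S)⁻¹ F_Sᵀ b`, satisfies `‖ĉ_S - c*_S‖₂ ≤ ε / √(1 - (k-1)μ)`. -/
theorem stmt4 (m k : ℕ) (A : Matrix (Fin m) (Fin k) ℝ) (μ ε : ℝ)
    (hunit : ∀ j, ∑ i, (A i j) ^ 2 = 1)
    (hμ : ∀ j l, j ≠ l → |∑ i, A i j * A i l| ≤ μ)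
    (hμ0 : 0 ≤ μ)
    (hk : (2 * (k : ℝ) - 1) * μ < 1)
    (cstar : Fin k → ℝ) (e : Fin m → ℝ) (he : Real.sqrt (∑ i, (e i) ^ 2) ≤ ε)
    (b : Fin m → ℝ) (hb : b = A.mulVec cstar + e)
    (chat : Fin k → ℝ)
    (hchat : chat = (Aᵀ * A)⁻¹.mulVec (Aᵀ.mulVec b)) :
    Real.sqrt (∑ j, (chat j - cstar j) ^ 2) ≤ ε / Real.sqrt (1 - ((k : ℝ) - 1) * μ) := by
  set lam := 1 - ((k : ℝ) - 1) * μ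
  have hlam : 0 < lam := by
    linarith [mul_nonneg (Nat.cast_nonneg k : (0 : ℝ) ≤ k) hμ0]
  have hG : ∀ x, lam * (x ⬝ᵥ x) ≤ x ⬝ᵥ (Aᵀ * A) *ᵥ x := by
    simpa using mul_dotProduct_self_le_dotProduct_mulVec (G := Aᵀ * A)
      (fun j => by simpa [mul_apply, sq] using hunit j)
      (fun j l hjl => by simpa [mul_apply] using hμ j l hjl)
  have hnormal : (Aᵀ * A) *ᵥ (chat - cstar) = Aᵀ *ᵥ e := by
    rw [hchat, hb]
    exact transpose_mul_self_mulVec_leastSquares_sub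
      (isUnit_det_of_mul_dotProduct_self_le hlam hG) cstar e
  have herr : lam * ((chat - cstar) ⬝ᵥ (chat - cstar)) ≤ ε ^ 2 := calc
    _ ≤ (chat - cstar) ⬝ᵥ (Aᵀ * A) *ᵥ (chat - cstar) := hG _
    _ = A *ᵥ (chat - cstar) ⬝ᵥ A *ᵥ (chat - cstar) := dotProduct_transpose_mul_self_mulVec A _
    _ ≤ e ⬝ᵥ e := dotProduct_self_mulVec_le_of_normal_eq hnormal
    _ ≤ ε ^ 2 := by simpa [dotProduct, sq] using (Real.sqrt_le_iff.mp he).2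
  rw [le_div_iff₀ (Real.sqrt_pos.2 hlam), ← Real.sqrt_mul (by positivity), Real.sqrt_le_iff]
  refine ⟨(Real.sqrt_nonneg _).trans he, ?_⟩
  simpa [dotProduct, sq, mul_comm] using herr
end

section
/- Let p be the quadratic polynomial minimizing the least-squares moving-average functional G(a₀,a₁,a₂) = ∑_{j=i,i±1,i±2} ( (1/5)∑_{l=0,±1,±2} p(x_{j+l}) - Ũ_j )², where Ũ_j is the five-point moving average of data U. If the data satisfy U_j = u(x_j) + O(h³) for a C³ function u on a uniform grid with spacing h, then p(x_i) = u(x_i) + O(h³); i.e., LSMA denoising preserves third-order approximation accuracy. -/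
set_option maxHeartbeats 1600000

open Set in
private lemma quadkey' (α β : ℝ) (hβ : 0 ≤ β) (h : ∀ t : ℝ, 0 ≤ α * t + β * t^2) : α = 0 := by
  by_contra hne
  have ht := h (-α / (2*β+1))
  have hb : (0:ℝ) < 2*β+1 := by linarith
  rw [div_eq_mul_inv] at ht
  have hs : 0 < (2*β+1)⁻¹ := inv_pos.mpr hb
  have hα2 : 0 < α^2 := by positivity
  have hβs : β * (2*β+1)⁻¹ < 1 := by
    rw [← div_eq_mul_inv]; exact (div_lt_one hb).mpr (by linarith)
  nlinarith [ht, hβs, mul_pos hα2 hs]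

open Set in
private lemma iterWithin_eq' {u : ℝ → ℝ} (hu : ContDiff ℝ 3 u) {s : Set ℝ} (hs : UniqueDiffOn ℝ s)
    {x : ℝ} (hx : x ∈ s) {m : ℕ} (hm : (m : ℕ∞) ≤ 3) :
    iteratedDerivWithin m u s x = iteratedDeriv m u x := by
  have h0 : ContDiff ℝ (3:ℕ∞) u := by exact_mod_cast hu
  have h1 : HasFTaylorSeriesUpToOn (3:ℕ∞) u (ftaylorSeries ℝ u) s :=
    (contDiff_iff_ftaylorSeries.mp h0).hasFTaylorSeriesUpToOn s
  have h2 := h1.eq_iteratedFDerivWithin_of_uniqueDiffOn (by exact_mod_cast hm) hs hx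
  simp only [iteratedDerivWithin, iteratedDeriv]
  rw [← h2]
  rfl

open Set in
private lemma taylor3_right' {u : ℝ → ℝ} (hu : ContDiff ℝ 3 u) {X M y : ℝ} (hy : X ≤ y)
    (hM : ∀ z ∈ Icc X y, |iteratedDeriv 3 u z| ≤ M) :
    |u y - (u X + deriv u X * (y - X) + iteratedDeriv 2 u X * (y - X)^2 / 2)| ≤
      M * (y - X)^3 / 2 := by
  rcases eq_or_lt_of_le hy with rfl | hlt
  · simp
  have hud : UniqueDiffOn ℝ (Icc X y) := uniqueDiffOn_Icc hlt
  have hXm : X ∈ Icc X y := ⟨le_refl _, hy⟩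
  have hcd : ContDiffOn ℝ (2+1 : ℕ) u (Icc X y) := by
    apply ContDiff.contDiffOn (s := Icc X y)
    exact hu.of_le (by norm_num)
  have hbound : ∀ z ∈ Icc X y, ‖iteratedDerivWithin (2+1) u (Icc X y) z‖ ≤ M := by
    intro z hz
    rw [Real.norm_eq_abs, iterWithin_eq' hu hud hz (by norm_num)]
    exact hM z hz
  have H := taylor_mean_remainder_bound (n := 2) hy hcd (right_mem_Icc.mpr hy) hbound
  rw [Real.norm_eq_abs] at H
  have hT : taylorWithinEval u 2 (Icc X y) X y =
      u X + deriv u X * (y - X) + iteratedDeriv 2 u X * (y - X)^2 / 2 := by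
    rw [taylor_within_apply]
    have e0 := iterWithin_eq' hu hud hXm (m := 0) (by norm_num)
    have e1 := iterWithin_eq' hu hud hXm (m := 1) (by norm_num)
    have e2 := iterWithin_eq' hu hud hXm (m := 2) (by norm_num)
    simp only [Finset.sum_range_succ, Finset.sum_range_zero, smul_eq_mul]
    rw [e0, e1, e2, iteratedDeriv_zero, iteratedDeriv_one]
    simp only [Nat.factorial_zero, Nat.factorial_one, Nat.factorial_two, pow_zero, pow_one,
      Nat.cast_one, Nat.cast_ofNat]
    push_cast
    ring
  have hfact : M * (y - X)^(2+1) / (Nat.factorial 2 : ℝ) = M * (y - X)^3 / 2 := by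
    norm_num [Nat.factorial]
  rw [hT, hfact] at H
  exact H

open Set in
private lemma taylor3_left' {u : ℝ → ℝ} (hu : ContDiff ℝ 3 u) {X M y : ℝ} (hy : y ≤ X)
    (hM : ∀ z ∈ Icc y X, |iteratedDeriv 3 u z| ≤ M) :
    |u y - (u X + deriv u X * (y - X) + iteratedDeriv 2 u X * (y - X)^2 / 2)| ≤
      M * (X - y)^3 / 2 := by
  set g : ℝ → ℝ := fun t => u (2*X + -t) with hgdef
  have hg : ContDiff ℝ 3 g := hu.comp (contDiff_const.add contDiff_id.neg)
  have hgn : ∀ (n : ℕ) (a : ℝ), iteratedDeriv n g a = (-1:ℝ)^n • iteratedDeriv n u (2*X + -a) := by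
    intro n a
    have h1 := iteratedDeriv_comp_neg n (fun s => u (2*X + s)) a
    rw [iteratedDeriv_comp_const_add] at h1
    exact h1
  have hM' : ∀ z ∈ Icc X (2*X - y), |iteratedDeriv 3 g z| ≤ M := by
    intro z hz
    rw [hgn]
    have hsimp : ((-1:ℝ))^3 • iteratedDeriv 3 u (2*X + -z) = -(iteratedDeriv 3 u (2*X + -z)) := by
      norm_num
    rw [hsimp, abs_neg]
    exact hM (2*X + -z) ⟨by linarith [hz.2], by linarith [hz.1]⟩
  have H := taylor3_right' hg (X := X) (y := 2*X - y) (by linarith) hM'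
  have e0 : g (2*X - y) = u y := by rw [hgdef]; norm_num
  have e1 : g X = u X := by rw [hgdef]; norm_num; congr 1; ring
  have ed1 : deriv g X = -(deriv u X) := by
    rw [← iteratedDeriv_one, hgn 1 X, ← iteratedDeriv_one]
    have : 2*X + -X = X := by ring
    rw [this]; norm_num
  have ed2 : iteratedDeriv 2 g X = iteratedDeriv 2 u X := by
    rw [hgn 2 X]
    have : 2*X + -X = X := by ring
    rw [this]; norm_num
  rw [e0, e1, ed1, ed2] at H
  have harg : u y - (u X + -deriv u X * (2*X - y - X) + iteratedDeriv 2 u X * (2*X - y - X)^2 / 2)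
      = u y - (u X + deriv u X * (y - X) + iteratedDeriv 2 u X * (y - X)^2 / 2) := by ring
  rw [harg] at H
  have hrhs : M * (2*X - y - X)^3 / 2 = M * (X - y)^3 / 2 := by ring
  rw [hrhs] at H
  exact H

open Set in
private lemma taylor3' {u : ℝ → ℝ} (hu : ContDiff ℝ 3 u) {X M r y : ℝ} (hy : |y - X| ≤ r)
    (hM : ∀ z ∈ Icc (X - r) (X + r), |iteratedDeriv 3 u z| ≤ M) :
    |u y - (u X + deriv u X * (y - X) + iteratedDeriv 2 u X * (y - X)^2 / 2)| ≤
      M * |y - X|^3 / 2 := by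
  have hy1 : y ≤ X + r := by cases' abs_le.mp hy with h1 h2; linarith
  have hy2 : X - r ≤ y := by cases' abs_le.mp hy with h1 h2; linarith
  rcases le_total X y with hc | hc
  · have := taylor3_right' hu hc (fun z hz => hM z ⟨by linarith [hz.1], by linarith [hz.2]⟩)
    rwa [abs_of_nonneg (by linarith : (0:ℝ) ≤ y - X)]
  · have := taylor3_left' hu hc (fun z hz => hM z ⟨by linarith [hz.1], by linarith [hz.2]⟩)
    rwa [abs_of_nonpos (by linarith : y - X ≤ 0), neg_sub]

/-- LSMA preserves third-order accuracy: on the uniform grid `x_j = X + j h`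
centered at `x_i = X`, if data `U_j = u(x_j) + O(h³)` for a `C³` function `u`, and
`p(x) = a₀ + a₁(x-X) + a₂(x-X)²` minimizes the least-squares moving-average functional
`G(a₀,a₁,a₂) = ∑_{j=i,i±1,i±2} ((1/5)∑_{l=0,±1,±2} p(x_{j+l}) - Ũ_j)²` with
`Ũ_j` the five-point moving average of `U`, then `p(x_i) = a₀ = u(x_i) + O(h³)`. -/
theorem stmt6 (u : ℝ → ℝ) (hu : ContDiff ℝ 3 u) (C X : ℝ) :
    ∃ C' : ℝ, ∀ h : ℝ, 0 < h → h ≤ 1 →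
      ∀ U : ℤ → ℝ,
        (∀ j : ℤ, |j| ≤ 4 → |U j - u (X + (j : ℝ) * h)| ≤ C * h ^ 3) →
        ∀ a₀ a₁ a₂ : ℝ,
          (∀ b₀ b₁ b₂ : ℝ,
            (∑ j ∈ Finset.Icc (-2 : ℤ) 2,
              ((1 / 5 : ℝ) * ∑ l ∈ Finset.Icc (-2 : ℤ) 2,
                  (a₀ + a₁ * (((j + l : ℤ) : ℝ) * h) + a₂ * (((j + l : ℤ) : ℝ) * h) ^ 2)
                - (1 / 5 : ℝ) * ∑ l ∈ Finset.Icc (-2 : ℤ) 2, U (j + l)) ^ 2)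
            ≤ ∑ j ∈ Finset.Icc (-2 : ℤ) 2,
              ((1 / 5 : ℝ) * ∑ l ∈ Finset.Icc (-2 : ℤ) 2,
                  (b₀ + b₁ * (((j + l : ℤ) : ℝ) * h) + b₂ * (((j + l : ℤ) : ℝ) * h) ^ 2)
                - (1 / 5 : ℝ) * ∑ l ∈ Finset.Icc (-2 : ℤ) 2, U (j + l)) ^ 2) →
          |a₀ - u X| ≤ C' * h ^ 3 := by
  obtain ⟨M, hMb⟩ : ∃ M, ∀ z ∈ Set.Icc (X-4) (X+4), |iteratedDeriv 3 u z| ≤ M := by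
    obtain ⟨zM, hzM, hmax⟩ := (isCompact_Icc (a := X-4) (b := X+4)).exists_isMaxOn
      (Set.nonempty_Icc.mpr (by linarith))
      ((hu.continuous_iteratedDeriv 3 (by norm_num)).abs.continuousOn)
    exact ⟨|iteratedDeriv 3 u zM|, fun z hz => hmax hz⟩
  have hM0 : 0 ≤ M := le_trans (abs_nonneg _) (hMb X ⟨by linarith, by linarith⟩)
  refine ⟨2*C + 64*M, ?_⟩
  intro h hpos hle U hU a₀ a₁ a₂ hmin
  have hset : ∀ f : ℤ → ℝ, ∑ l ∈ Finset.Icc (-2:ℤ) 2, f l = f (-2) + f (-1) + f 0 + f 1 + f 2 := by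
    intro f
    rw [show Finset.Icc (-2:ℤ) 2 = {-2,-1,0,1,2} by decide]
    simp [Finset.sum_insert, Finset.mem_insert]
    ring
  have e0 : ∀ t : ℝ, 0 ≤ (10*a₀ + 40*a₂*h^2 - (2/5)*(U (-4) + 2*U (-3) + 3*U (-2) + 4*U (-1)
      + 5*U 0 + 4*U 1 + 3*U 2 + 2*U 3 + U 4)) * t + 5 * t^2 := by
    intro t
    have H := hmin (a₀ + t) a₁ a₂
    simp only [hset] at H
    norm_num at H
    linarith [H]
  have E0 := quadkey' _ 5 (by norm_num) e0
  have e2 : ∀ t : ℝ, 0 ≤ (2*h^2*(20*a₀ + 94*a₂*h^2 - (1/5)*(6*U (-4) + 9*U (-3) + 11*U (-2)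
      + 14*U (-1) + 20*U 0 + 14*U 1 + 11*U 2 + 9*U 3 + 6*U 4))) * t + (94*h^4) * t^2 := by
    intro t
    have H := hmin a₀ a₁ (a₂ + t)
    simp only [hset] at H
    norm_num at H
    linarith [H]
  have E2 := quadkey' _ (94*h^4) (by positivity) e2
  have E2' : 20*a₀ + 94*a₂*h^2 - (1/5)*(6*U (-4) + 9*U (-3) + 11*U (-2)
      + 14*U (-1) + 20*U 0 + 14*U 1 + 11*U 2 + 9*U 3 + 6*U 4) = 0 := by
    rcases mul_eq_zero.mp E2 with h' | h'
    · exact absurd h' (by positivity)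
    · exact h'
  have ha0 : a₀ = (-13*U (-4) + 4*U (-3) + 31*U (-2) + 48*U (-1) + 35*U 0 + 48*U 1
      + 31*U 2 + 4*U 3 - 13*U 4)/175 := by
    linear_combination (47/70) * E0 + (-2/7) * E2'
  -- Taylor-based bound on each data point against the quadratic Taylor polynomial of u at X
  have hR : ∀ k : ℤ, |k| ≤ 4 →
      |U k - (u X + deriv u X * ((k:ℝ)*h) + iteratedDeriv 2 u X * ((k:ℝ)*h)^2 / 2)|
        ≤ C*h^3 + 32*(M*h^3) := by
    intro k hk
    have hk' : |(k:ℝ)| ≤ 4 := by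
      have : ((|k| : ℤ) : ℝ) ≤ 4 := by exact_mod_cast hk
      rwa [Int.cast_abs] at this
    have hyr : |(X + (k:ℝ)*h) - X| ≤ 4 := by
      have harg : X + (k:ℝ)*h - X = (k:ℝ)*h := by ring
      rw [harg, abs_mul, abs_of_pos hpos]
      nlinarith [abs_nonneg (k:ℝ)]
    have hT := taylor3' hu (X := X) (M := M) (r := 4) hyr hMb
    have harg : X + (k:ℝ)*h - X = (k:ℝ)*h := by ring
    rw [harg] at hT
    have h1 := hU k hk
    have habs3 : |(k:ℝ)*h|^3 ≤ 64*h^3 := by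
      rw [abs_mul, abs_of_pos hpos, mul_pow]
      have hcube : |(k:ℝ)|^3 ≤ 64 := by
        have h4 := pow_le_pow_left₀ (abs_nonneg (k:ℝ)) hk' 3
        norm_num at h4
        exact h4
      nlinarith [pow_pos hpos 3]
    have htri := abs_sub_le (U k) (u (X + (k:ℝ)*h))
      (u X + deriv u X * ((k:ℝ)*h) + iteratedDeriv 2 u X * ((k:ℝ)*h)^2/2)
    have hMul := mul_le_mul_of_nonneg_left habs3 (by linarith : (0:ℝ) ≤ M/2)
    linarith [hT, h1, htri, hMul]
  have b1 := abs_le.mp (hR (-4) (by decide))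
  have b2 := abs_le.mp (hR (-3) (by decide))
  have b3 := abs_le.mp (hR (-2) (by decide))
  have b4 := abs_le.mp (hR (-1) (by decide))
  have b5 := abs_le.mp (hR 0 (by decide))
  have b6 := abs_le.mp (hR 1 (by decide))
  have b7 := abs_le.mp (hR 2 (by decide))
  have b8 := abs_le.mp (hR 3 (by decide))
  have b9 := abs_le.mp (hR 4 (by decide))
  push_cast at b1 b2 b3 b4 b5 b6 b7 b8 b9
  have hCh : 0 ≤ C*h^3 := le_trans (abs_nonneg _) (by simpa using hU 0 (by decide))
  have hMh : 0 ≤ M*h^3 := mul_nonneg hM0 (by positivity)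
  rw [abs_le]
  constructor
  · linarith [ha0, b1.1, b2.1, b3.1, b4.1, b5.1, b6.1, b7.1, b8.1, b9.1,
      b1.2, b2.2, b3.2, b4.2, b5.2, b6.2, b7.2, b8.2, b9.2]
  · linarith [ha0, b1.1, b2.1, b3.1, b4.1, b5.1, b6.1, b7.1, b8.1, b9.1,
      b1.2, b2.2, b3.2, b4.2, b5.2, b6.2, b7.2, b8.2, b9.2]
end

section
/- Suppose data U_j^k = u(x_j,t_k) + ε_j^k with |ε_j^k| ≤ ε. Then the error e^{noise} of the weak-form linear system with a true k-sparse coefficient vector c* satisfies ‖e^{noise}‖_∞ ≤ S̄* · max_h |Ω_h| · ε + O(ε²), where S̄* = max_h sup_{(x_j,t_k)∈Ω_h} |∑_{l∈Supp*} (-1)^{α_l} c_l* β_l (U_j^k)^{β_l-1} ∂_x^{α_l}φ(x_j,t_k) - ∂_t φ(x_j,t_k)|; that is, the noise-induced error is first-order in ε with Lipschitz constant S̄* max_h|Ω_h|, independent of the derivative orders α_l appearing in the PDE. -/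
/-!
Write the integrand of the weak residual at a grid point as a polynomial `r` in the data value.
Then the noise error at that point is `r(u + e) - r(u)`, and expanding each power `v ↦ v ^ β`
to second order around the noisy value `u + e` gives `|r(u + e) - r(u)| ≤ |e| |r'(u + e)| + K e²`,
where `|r'(u + e)| ≤ S̄*` is the hypothesis and `K` depends only on the clean data and the test
functions once `|e| ≤ 1`. The derivative orders `α_l` enter only through the coefficients of `r`.
Integrating against nonnegative quadrature weights of mass at most `A` multiplies both terms by `A`.
-/

open Finset

-- `n.choose 2 * M ^ (n - 2)` is the Lagrange bound `sup |f''| / 2` for `f v = v ^ n`.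
theorem abs_add_pow_sub_pow_sub_le {v e M : ℝ} (hv : |v| ≤ M) (hve : |v + e| ≤ M) (n : ℕ) :
    |(v + e) ^ n - v ^ n - n * v ^ (n - 1) * e| ≤ n.choose 2 * M ^ (n - 2) * e ^ 2 := by
  induction n with
  | zero => simp
  | succ n ih =>
    have hM : 0 ≤ M := (abs_nonneg v).trans hv
    have hrec : (v + e) ^ (n + 1) - v ^ (n + 1) - ((n + 1 : ℕ) : ℝ) * v ^ (n + 1 - 1) * e
        = (v + e) * ((v + e) ^ n - v ^ n - n * v ^ (n - 1) * e) + n * v ^ (n - 1) * e ^ 2 := by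
      rcases n with _ | n
      · simp
      · simp only [Nat.add_sub_cancel]
        push_cast
        ring
    have hvn : |v ^ (n - 1)| ≤ M ^ (n - 1) := by
      rw [abs_pow]
      exact pow_le_pow_left₀ (abs_nonneg v) hv _
    calc |(v + e) ^ (n + 1) - v ^ (n + 1) - ((n + 1 : ℕ) : ℝ) * v ^ (n + 1 - 1) * e|
        ≤ M * (n.choose 2 * M ^ (n - 2) * e ^ 2) + n * M ^ (n - 1) * e ^ 2 := by
          rw [hrec]
          refine (abs_add_le _ _).trans (add_le_add ?_ ?_)
          · rw [abs_mul]
            exact mul_le_mul hve ih (abs_nonneg _) hM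
          · rw [abs_mul, abs_mul, abs_of_nonneg (sq_nonneg e), Nat.abs_cast]
            gcongr
      _ = (n + 1).choose 2 * M ^ (n + 1 - 2) * e ^ 2 := by
          rcases n with _ | _ | n
          · simp
          · simp
          · simp only [Nat.choose_succ_succ (n + 2) 1, Nat.choose_one_right,
              show n + 2 + 1 - 2 = n + 1 by omega, show n + 2 - 1 = n + 1 by omega]
            push_cast
            ring

section PointResidual

variable {ι : Type*} [Fintype ι] (a b : ι → ℝ) (β : ι → ℕ) (T : ℝ)

/-- In the theorem `a_l = (-1)^{α_l} c_l`, `b_l = ∂ₓ^{α_l} φ_h` and `T = ∂ₜ φ_h` at a grid point. -/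
def pointResidual (v : ℝ) : ℝ :=
  ∑ l, a l * v ^ β l * b l - v * T

def pointResidualDeriv (v : ℝ) : ℝ :=
  ∑ l, a l * β l * v ^ (β l - 1) * b l - T

theorem abs_pointResidual_add_sub_sub_le {v e M : ℝ} (hv : |v| ≤ M) (hve : |v + e| ≤ M) :
    |pointResidual a b β T (v + e) - pointResidual a b β T v - e * pointResidualDeriv a b β T v|
      ≤ (∑ l, |a l| * |b l| * (β l).choose 2 * M ^ (β l - 2)) * e ^ 2 := by
  have hexpand : pointResidual a b β T (v + e) - pointResidual a b β T v
        - e * pointResidualDeriv a b β T v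
      = ∑ l, a l * ((v + e) ^ β l - v ^ β l - β l * v ^ (β l - 1) * e) * b l := by
    have hterm : ∀ l, a l * ((v + e) ^ β l - v ^ β l - β l * v ^ (β l - 1) * e) * b l
        = a l * (v + e) ^ β l * b l - a l * v ^ β l * b l
          - e * (a l * β l * v ^ (β l - 1) * b l) := fun l => by ring
    rw [sum_congr rfl fun l _ => hterm l, sum_sub_distrib, sum_sub_distrib, ← mul_sum]
    simp only [pointResidual, pointResidualDeriv]
    ring
  rw [hexpand, sum_mul]
  refine (abs_sum_le_sum_abs _ _).trans (sum_le_sum fun l _ => ?_)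
  rw [abs_mul, abs_mul]
  calc |a l| * |(v + e) ^ β l - v ^ β l - β l * v ^ (β l - 1) * e| * |b l|
      ≤ |a l| * ((β l).choose 2 * M ^ (β l - 2) * e ^ 2) * |b l| := by
        gcongr
        exact abs_add_pow_sub_pow_sub_le hv hve (β l)
    _ = |a l| * |b l| * (β l).choose 2 * M ^ (β l - 2) * e ^ 2 := by ring

theorem abs_pointResidual_add_sub_le {u e M : ℝ} (hu : |u| ≤ M) (hue : |u + e| ≤ M) :
    |pointResidual a b β T (u + e) - pointResidual a b β T u|
      ≤ |e| * |pointResidualDeriv a b β T (u + e)|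
        + (∑ l, |a l| * |b l| * (β l).choose 2 * M ^ (β l - 2)) * e ^ 2 := by
  have h := abs_pointResidual_add_sub_sub_le a b β T hue (e := -e) (by simpa using hu)
  rw [add_neg_cancel_right, neg_sq] at h
  calc |pointResidual a b β T (u + e) - pointResidual a b β T u|
      = |e * pointResidualDeriv a b β T (u + e) - (pointResidual a b β T u
          - pointResidual a b β T (u + e) - -e * pointResidualDeriv a b β T (u + e))| := by
        congr 1
        ring
    _ ≤ _ := by
        rw [← abs_mul]
        exact (abs_sub _ _).trans (add_le_add le_rfl h)

end PointResidual

theorem abs_sum_mul_sub_sum_mul_le {ι : Type*} [Fintype ι] {w f g : ι → ℝ} {A B : ℝ}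
    (hw : ∀ i, 0 ≤ w i) (hA : ∑ i, w i ≤ A) (hB : 0 ≤ B)
    (hfg : ∀ i, w i ≠ 0 → |f i - g i| ≤ B) :
    |∑ i, w i * f i - ∑ i, w i * g i| ≤ A * B := by
  rw [← sum_sub_distrib]
  calc |∑ i, (w i * f i - w i * g i)| ≤ ∑ i, w i * B := by
        refine (abs_sum_le_sum_abs _ _).trans (sum_le_sum fun i _ => ?_)
        rw [← mul_sub, abs_mul, abs_of_nonneg (hw i)]
        rcases eq_or_ne (w i) 0 with h0 | h0
        · simp [h0]
        · exact mul_le_mul_of_nonneg_left (hfg i h0) (hw i)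
    _ ≤ A * B := by
        rw [← sum_mul]
        exact mul_le_mul_of_nonneg_right hA hB

theorem stmt9_general (Nx Nt H Nf : ℕ)
    (x : Fin Nx → ℝ) (t : Fin Nt → ℝ)
    (uval : Fin Nx → Fin Nt → ℝ)
    (φ : Fin H → ℝ → ℝ → ℝ)
    (w : Fin H → Fin Nx × Fin Nt → ℝ) (hw : ∀ h p, 0 ≤ w h p)
    (A : ℝ) (hA : ∀ h, ∑ p : Fin Nx × Fin Nt, w h p ≤ A)
    (α β : Fin Nf → ℕ)
    (c : Fin Nf → ℝ) :
    ∃ C : ℝ, ∀ ε : ℝ, 0 ≤ ε → ε ≤ 1 →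
      ∀ noise : Fin Nx → Fin Nt → ℝ, (∀ j k, |noise j k| ≤ ε) →
      ∀ Sbar : ℝ, 0 ≤ Sbar →
        (∀ (h : Fin H) (j : Fin Nx) (k : Fin Nt), w h (j, k) ≠ 0 →
          |(∑ l, (-1 : ℝ) ^ (α l) * c l * (β l : ℝ) * (uval j k + noise j k) ^ (β l - 1) *
              iteratedDeriv (α l) (fun s => φ h s (t k)) (x j))
            - deriv (fun s => φ h (x j) s) (t k)| ≤ Sbar) →
      ∀ h : Fin H,
        |(∑ p : Fin Nx × Fin Nt, w h p *
            ((∑ l, (-1 : ℝ) ^ (α l) * c l * (uval p.1 p.2 + noise p.1 p.2) ^ (β l) *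
                iteratedDeriv (α l) (fun s => φ h s (t p.2)) (x p.1))
              - (uval p.1 p.2 + noise p.1 p.2) * deriv (fun s => φ h (x p.1) s) (t p.2)))
          - (∑ p : Fin Nx × Fin Nt, w h p *
            ((∑ l, (-1 : ℝ) ^ (α l) * c l * (uval p.1 p.2) ^ (β l) *
                iteratedDeriv (α l) (fun s => φ h s (t p.2)) (x p.1))
              - uval p.1 p.2 * deriv (fun s => φ h (x p.1) s) (t p.2)))|
        ≤ Sbar * A * ε + C * ε ^ 2 := by
  set M : ℝ := ∑ p : Fin Nx × Fin Nt, |uval p.1 p.2| + 1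
  have hM : ∀ p : Fin Nx × Fin Nt, |uval p.1 p.2| + 1 ≤ M := fun p =>
    add_le_add_left (single_le_sum (fun q _ => abs_nonneg (uval q.1 q.2)) (mem_univ p)) 1
  set K : Fin H → Fin Nx × Fin Nt → ℝ := fun h p => ∑ l, |(-1 : ℝ) ^ α l * c l|
    * |iteratedDeriv (α l) (fun s => φ h s (t p.2)) (x p.1)| * (β l).choose 2 * M ^ (β l - 2)
  have hK0 : ∀ h p, 0 ≤ K h p := fun h p => sum_nonneg fun l _ => by
    have : 0 ≤ M := by linarith [hM p, abs_nonneg (uval p.1 p.2)]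
    positivity
  set Kmax : ℝ := ∑ q : Fin H × (Fin Nx × Fin Nt), K q.1 q.2
  have hK : ∀ h p, K h p ≤ Kmax := fun h p =>
    single_le_sum (fun q _ => hK0 q.1 q.2) (mem_univ (h, p))
  refine ⟨A * Kmax, fun ε hε hε1 noise hnoise Sbar hSbar hS h => ?_⟩
  have hKmax : 0 ≤ Kmax := sum_nonneg fun q _ => hK0 q.1 q.2
  calc _ ≤ A * (Sbar * ε + Kmax * ε ^ 2) := by
        refine abs_sum_mul_sub_sum_mul_le (hw h) (hA h) (by positivity) fun p hp => ?_
        have hu : |uval p.1 p.2| ≤ M := by linarith [hM p]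
        have hue : |uval p.1 p.2 + noise p.1 p.2| ≤ M :=
          (abs_add_le _ _).trans (by linarith [hM p, hnoise p.1 p.2])
        have hsq : noise p.1 p.2 ^ 2 ≤ ε ^ 2 := by
          rw [← sq_abs]
          exact pow_le_pow_left₀ (abs_nonneg _) (hnoise p.1 p.2) 2
        refine (abs_pointResidual_add_sub_le _ _ β _ hu hue).trans (add_le_add ?_ ?_)
        · rw [mul_comm Sbar]
          exact mul_le_mul (hnoise p.1 p.2) (hS h p.1 p.2 hp) (abs_nonneg _) hε
        · exact mul_le_mul (hK h p) hsq (sq_nonneg _) hKmax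
    _ = Sbar * A * ε + A * Kmax * ε ^ 2 := by ring

/-- the noise-induced error of the weak-form linear system is first order in
the noise level `ε`, with Lipschitz constant `S̄* · max_h |Ω_h|`, up to `O(ε²)`; the bound is
independent of the derivative orders `α_l` of the features. The weak features are evaluated
by a quadrature with nonnegative weights `w h` of total mass at most `A = max_h |Ω_h|`, and
`S̄*` bounds `|∑_l (-1)^{α_l} c_l β_l (U_j^k)^{β_l-1} ∂ₓ^{α_l}φ_h(x_j,t_k) - ∂ₜφ_h(x_j,t_k)|`
at every quadrature point of every `Ω_h`. -/
theorem stmt9 (Nx Nt H Nf : ℕ)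
    (x : Fin Nx → ℝ) (t : Fin Nt → ℝ)
    (uval : Fin Nx → Fin Nt → ℝ)
    (φ : Fin H → ℝ → ℝ → ℝ)
    (w : Fin H → Fin Nx × Fin Nt → ℝ) (hw : ∀ h p, 0 ≤ w h p)
    (A : ℝ) (hA : ∀ h, ∑ p : Fin Nx × Fin Nt, w h p ≤ A)
    (α β : Fin Nf → ℕ) (hβ : ∀ l, 1 ≤ β l)
    (c : Fin Nf → ℝ) :
    ∃ C : ℝ, ∀ ε : ℝ, 0 ≤ ε → ε ≤ 1 →
      ∀ noise : Fin Nx → Fin Nt → ℝ, (∀ j k, |noise j k| ≤ ε) →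
      ∀ Sbar : ℝ, 0 ≤ Sbar →
        (∀ (h : Fin H) (j : Fin Nx) (k : Fin Nt), w h (j, k) ≠ 0 →
          |(∑ l, (-1 : ℝ) ^ (α l) * c l * (β l : ℝ) * (uval j k + noise j k) ^ (β l - 1) *
              iteratedDeriv (α l) (fun s => φ h s (t k)) (x j))
            - deriv (fun s => φ h (x j) s) (t k)| ≤ Sbar) →
      ∀ h : Fin H,
        |(∑ p : Fin Nx × Fin Nt, w h p *
            ((∑ l, (-1 : ℝ) ^ (α l) * c l * (uval p.1 p.2 + noise p.1 p.2) ^ (β l) *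
                iteratedDeriv (α l) (fun s => φ h s (t p.2)) (x p.1))
              - (uval p.1 p.2 + noise p.1 p.2) * deriv (fun s => φ h (x p.1) s) (t p.2)))
          - (∑ p : Fin Nx × Fin Nt, w h p *
            ((∑ l, (-1 : ℝ) ^ (α l) * c l * (uval p.1 p.2) ^ (β l) *
                iteratedDeriv (α l) (fun s => φ h s (t p.2)) (x p.1))
              - uval p.1 p.2 * deriv (fun s => φ h (x p.1) s) (t p.2)))|
        ≤ Sbar * A * ε + C * ε ^ 2 :=
  stmt9_general Nx Nt H Nf x t uval φ w hw A hA α β c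
end

section
/- For the transport equation u_t = -a u_x (a ∈ ℝ, a ≠ 0) on the circle with initial data u₀ whose Fourier coefficients satisfy |û₀(k)| ≥ c|k|^{-s} for |k| ≤ K, any linear subspace V ⊂ L² approximating all snapshots {u(·,t) : 0 ≤ t ≤ T} with T ≥ 2π/(a) to within ε in L² must have dimension at least the number of k with c|k|^{-s} > ε; i.e., dim V ≥ (c/ε)^{1/s} − 1. -/
/-!
If `n + 1 < (c/ε)^{1/s}`, the `N = n + 1` modes `k = 1, …, N` all have `‖b k‖ > ε`. Restricted
to these coordinates, the approximating space is spanned by `n` vectors of `ℂ^N`, so it misses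
some unit vector `u`, and every snapshot being `ε`-close to it forces `|⟪u, x(t)⟫| ≤ ε`.
Sampling at the `N` equally spaced times `t_j = 2πj/(aN)` of one period turns `j ↦ ⟪u, x(t_j)⟫`
into a discrete Fourier transform, so by Parseval
`∑_j |⟪u, x(t_j)⟫|² = N ∑_k |u_k|² ‖b k‖² > N ε²`, a contradiction.
-/

open Finset ComplexConjugate
open scoped InnerProductSpace Real

theorem Fin.eq_of_natCast_dvd_sub {N : ℕ} {m m' : Fin N} (h : (N : ℤ) ∣ (m : ℤ) - m') :
    m = m' := by
  have := Int.eq_zero_of_abs_lt_dvd h (abs_lt.2 ⟨by omega, by omega⟩)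
  omega

theorem lt_mul_rpow_neg_of_lt_rpow_one_div {c s ε x : ℝ} (hc : 0 < c) (hs : 0 < s) (hε : 0 < ε)
    (hx : 0 < x) (h : x < (c / ε) ^ (1 / s)) : ε < c * x ^ (-s) := by
  rw [one_div, Real.lt_rpow_inv_iff_of_pos hx.le (div_pos hc hε).le hs, lt_div_iff₀ hε] at h
  rw [Real.rpow_neg hx.le, ← div_eq_mul_inv, lt_div_iff₀ (Real.rpow_pos_of_pos hx s)]
  linarith

theorem lt_norm_of_mul_abs_rpow_neg_le {E : Type*} [Norm E] {c s ε : ℝ} {K : ℕ} (hc : 0 < c)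
    (hs : 0 < s) (hε : 0 < ε) {b : ℤ → E}
    (hb : ∀ k : ℤ, k ≠ 0 → |k| ≤ (K : ℤ) → c * |(k : ℝ)| ^ (-s) ≤ ‖b k‖)
    (hK : (c / ε) ^ (1 / s) ≤ K) {k : ℤ} (hk : 0 < k) (hkc : (k : ℝ) < (c / ε) ^ (1 / s)) :
    ε < ‖b k‖ := by
  have hk' : (0 : ℝ) < k := by exact_mod_cast hk
  have hbk := hb k hk.ne' (by rw [abs_of_pos hk]; exact_mod_cast (hkc.trans_le hK).le)
  rw [abs_of_pos hk'] at hbk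
  exact (lt_mul_rpow_neg_of_lt_rpow_one_div hc hs hε hk' hkc).trans_le hbk

theorem geom_sum_eq_ite_of_pow_eq_one {K : Type*} [Field K] [DecidableEq K] {ξ : K} {N : ℕ}
    (h : ξ ^ N = 1) : ∑ j ∈ range N, ξ ^ j = if ξ = 1 then (N : K) else 0 := by
  split_ifs with h1
  · simp [h1]
  · rw [geom_sum_eq h1, h, sub_self, zero_div]

section Width

variable {𝕜 E : Type*} [RCLike 𝕜] [NormedAddCommGroup E] [InnerProductSpace 𝕜 E]

theorem norm_inner_le_of_mem_orthogonal {V : Submodule 𝕜 E} {u v : E} (hu : u ∈ Vᗮ) (hv : v ∈ V)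
    (x : E) : ‖⟪u, x⟫_𝕜‖ ≤ ‖u‖ * ‖x - v‖ := by
  calc ‖⟪u, x⟫_𝕜‖ = ‖⟪u, x - v⟫_𝕜‖ := by
        rw [inner_sub_right, Submodule.inner_left_of_mem_orthogonal hv hu, sub_zero]
    _ ≤ ‖u‖ * ‖x - v‖ := norm_inner_le_norm u (x - v)

theorem Submodule.eq_top_of_forall_exists_norm_sub_le {V : Submodule 𝕜 E}
    [V.HasOrthogonalProjection] {ι : Type*} (x : ι → E) {ε : ℝ}
    (hx : ∀ u : E, u ≠ 0 → ∃ j, ε * ‖u‖ < ‖⟪u, x j⟫_𝕜‖) (hV : ∀ j, ∃ v ∈ V, ‖x j - v‖ ≤ ε) :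
    V = ⊤ := by
  rw [← Submodule.orthogonal_eq_bot_iff, Submodule.eq_bot_iff]
  intro u hu
  by_contra hu0
  obtain ⟨j, hj⟩ := hx u hu0
  obtain ⟨v, hv, hxv⟩ := hV j
  have := norm_inner_le_of_mem_orthogonal hu hv (x j)
  nlinarith [norm_nonneg u]

end Width

theorem IsPrimitiveRoot.sum_norm_sq_sum_mul_zpow {ζ : ℂ} {N : ℕ} (hζ : IsPrimitiveRoot ζ N)
    {ι : Type*} [Fintype ι] (f : ι → ℤ)
    (hf : ∀ i i', (N : ℤ) ∣ f i - f i' → i = i') (c : ι → ℂ) :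
    ∑ j ∈ range N, ‖∑ i, c i * ζ ^ (f i * j)‖ ^ 2 = N * ∑ i, ‖c i‖ ^ 2 := by
  classical
  rcases Nat.eq_zero_or_pos N with rfl | hN
  · simp
  have hconj : ∀ k : ℤ, conj (ζ ^ k) = ζ ^ (-k) := fun k => by
    rw [map_zpow₀, ← RCLike.inv_eq_conj (hζ.norm'_eq_one hN.ne'), zpow_neg, inv_zpow]
  have horth : ∀ i i', ∑ j ∈ range N, ζ ^ (f i * j) * conj (ζ ^ (f i' * j)) =
      if i = i' then (N : ℂ) else 0 := fun i i' => by
    have hpow : ∀ j : ℕ, ζ ^ (f i * j) * conj (ζ ^ (f i' * j)) = (ζ ^ (f i - f i')) ^ j :=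
      fun j => by
        rw [hconj, ← zpow_natCast, ← zpow_mul, ← zpow_add₀ (hζ.ne_zero hN.ne')]
        ring_nf
    have hroot : (ζ ^ (f i - f i')) ^ N = 1 := by
      rw [← zpow_natCast, ← zpow_mul, mul_comm, zpow_mul, zpow_natCast, hζ.pow_eq_one, one_zpow]
    rw [sum_congr rfl fun j _ => hpow j, geom_sum_eq_ite_of_pow_eq_one hroot]
    simp only [hζ.zpow_eq_one_iff_dvd]
    exact if_congr ⟨hf i i', fun h => h ▸ by simp⟩ rfl rfl
  apply Complex.ofReal_injective
  push_cast
  simp_rw [← Complex.mul_conj']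
  calc ∑ j ∈ range N, (∑ i, c i * ζ ^ (f i * j)) * conj (∑ i, c i * ζ ^ (f i * j))
      = ∑ i, ∑ i', c i * conj (c i') * ∑ j ∈ range N, ζ ^ (f i * j) * conj (ζ ^ (f i' * j)) := by
        simp_rw [map_sum, sum_mul_sum, mul_sum, map_mul]
        rw [sum_comm]
        refine sum_congr rfl fun i _ => ?_
        rw [sum_comm]
        refine sum_congr rfl fun i' _ => sum_congr rfl fun j _ => ?_
        ring
    _ = N * ∑ i, c i * conj (c i) := by
        simp only [horth, mul_ite, mul_zero, sum_ite_eq, mem_univ, if_true, mul_sum]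
        exact sum_congr rfl fun _ _ => mul_comm _ _

/-- The Fourier coefficients of the solution `x ↦ u₀ (x - a t)` of the transport equation. -/
noncomputable def transportSnapshot (a : ℝ) (b : ℤ → ℂ) (t : ℝ) (k : ℤ) : ℂ :=
  b k * Complex.exp (-Complex.I * (k : ℂ) * (a : ℂ) * (t : ℂ))

noncomputable def modeRestriction {ι : Type*} (f : ι → ℤ) : (ℤ → ℂ) →ₗ[ℂ] EuclideanSpace ℂ ι :=
  (WithLp.linearEquiv 2 ℂ (ι → ℂ)).symm.toLinearMap ∘ₗ LinearMap.funLeft ℂ ℂ f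

@[simp]
theorem modeRestriction_apply {ι : Type*} (f : ι → ℤ) (g : ℤ → ℂ) (i : ι) :
    modeRestriction f g i = g (f i) := rfl

theorem norm_modeRestriction_le {ι : Type*} [Fintype ι] (f : ι → ℤ) (hf : f.Injective)
    {g : ℤ → ℂ} {ε : ℝ} (hε : 0 ≤ ε)
    (hg : ∀ J : Finset ℤ, ∑ k ∈ J, ‖g k‖ ^ 2 ≤ ε ^ 2) : ‖modeRestriction f g‖ ≤ ε := by
  classical
  refine (pow_le_pow_iff_left₀ (norm_nonneg _) hε two_ne_zero).1 ?_
  calc ‖modeRestriction f g‖ ^ 2 = ∑ i, ‖g (f i)‖ ^ 2 := EuclideanSpace.norm_sq_eq _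
    _ = ∑ k ∈ univ.image f, ‖g k‖ ^ 2 := by rw [sum_image fun i _ i' _ h => hf h]
    _ ≤ ε ^ 2 := hg _

theorem exists_mem_span_modeRestriction_norm_sub_le {ι κ : Type*} [Fintype ι]
    [Fintype κ] {f : ι → ℤ} (hf : f.Injective) (W : κ → ℤ → ℂ) {g : ℤ → ℂ} {γ : κ → ℂ} {ε : ℝ}
    (hε : 0 ≤ ε) (h : ∀ J : Finset ℤ, ∑ k ∈ J, ‖g k - ∑ i, γ i * W i k‖ ^ 2 ≤ ε ^ 2) :
    ∃ v ∈ Submodule.span ℂ (Set.range fun i => modeRestriction f (W i)),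
      ‖modeRestriction f g - v‖ ≤ ε := by
  refine ⟨∑ i, γ i • modeRestriction f (W i),
    Submodule.sum_mem _ fun i _ => Submodule.smul_mem _ _ (Submodule.subset_span ⟨i, rfl⟩), ?_⟩
  simp only [← map_smul, ← map_sum, ← map_sub]
  refine norm_modeRestriction_le f hf hε fun J => le_of_eq_of_le (sum_congr rfl fun k _ => ?_) (h J)
  simp [Finset.sum_apply]

theorem inner_modeRestriction_transportSnapshot_sample {ι : Type*} [Fintype ι] (f : ι → ℤ)
    (u : EuclideanSpace ℂ ι) {a : ℝ} (ha : a ≠ 0) (b : ℤ → ℂ) (N j : ℕ) :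
    ⟪u, modeRestriction f (transportSnapshot a b (2 * π * j / (a * N)))⟫_ℂ =
      ∑ i, conj (u i) * b (f i) * Complex.exp (-(2 * π * Complex.I / N)) ^ (f i * j) := by
  rw [PiLp.inner_apply]
  refine sum_congr rfl fun i _ => ?_
  rw [RCLike.inner_apply, modeRestriction_apply, transportSnapshot, ← Complex.exp_int_mul]
  rw [mul_comm, ← mul_assoc]
  have ha' : (a : ℂ) ≠ 0 := Complex.ofReal_ne_zero.mpr ha
  congr 2
  push_cast
  field_simp

theorem exists_sample_lt_norm_inner_transportSnapshot {ι : Type*} [Fintype ι] {N : ℕ}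
    (hN : 0 < N) {f : ι → ℤ} (hf : ∀ i i', (N : ℤ) ∣ f i - f i' → i = i') {a ε : ℝ}
    (ha : a ≠ 0) (hε : 0 ≤ ε) {b : ℤ → ℂ} (hb : ∀ i, ε < ‖b (f i)‖) {u : EuclideanSpace ℂ ι}
    (hu : u ≠ 0) :
    ∃ j : Fin N, ε * ‖u‖ <
      ‖⟪u, modeRestriction f (transportSnapshot a b (2 * π * j / (a * N)))⟫_ℂ‖ := by
  have hζ : IsPrimitiveRoot (Complex.exp (-(2 * π * Complex.I / N))) N := by
    rw [Complex.exp_neg]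
    exact (Complex.isPrimitiveRoot_exp N hN.ne').inv
  have hsum : ∑ j : Fin N,
      ‖⟪u, modeRestriction f (transportSnapshot a b (2 * π * j / (a * N)))⟫_ℂ‖ ^ 2 =
      N * ∑ i, ‖u i‖ ^ 2 * ‖b (f i)‖ ^ 2 := by
    rw [Fin.sum_univ_eq_sum_range (fun j =>
      ‖⟪u, modeRestriction f (transportSnapshot a b (2 * π * j / (a * N)))⟫_ℂ‖ ^ 2)]
    simp only [inner_modeRestriction_transportSnapshot_sample f u ha b N,
      hζ.sum_norm_sq_sum_mul_zpow f hf, norm_mul, Complex.norm_conj, mul_pow]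
  obtain ⟨i₀, hi₀⟩ : ∃ i, u i ≠ 0 := by
    by_contra! h
    exact hu (PiLp.ext h)
  have hweighted : ε ^ 2 * ‖u‖ ^ 2 < ∑ i, ‖u i‖ ^ 2 * ‖b (f i)‖ ^ 2 := by
    rw [EuclideanSpace.norm_sq_eq, mul_sum]
    refine sum_lt_sum (fun i _ => ?_) ⟨i₀, mem_univ _, ?_⟩
    · rw [mul_comm]
      gcongr
      exact (hb i).le
    · rw [mul_comm]
      gcongr
      exact hb i₀
  have hlt : ∑ _j : Fin N, (ε * ‖u‖) ^ 2 < ∑ j : Fin N,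
      ‖⟪u, modeRestriction f (transportSnapshot a b (2 * π * j / (a * N)))⟫_ℂ‖ ^ 2 := by
    rw [hsum, sum_const, card_univ, Fintype.card_fin, nsmul_eq_mul, mul_pow]
    gcongr
  obtain ⟨j, -, hj⟩ := exists_lt_of_sum_lt hlt
  exact ⟨j, lt_of_pow_lt_pow_left₀ 2 (norm_nonneg _) hj⟩

theorem two_pi_mul_div_mem_Icc {a T : ℝ} (ha : 0 < a) (hT : 2 * π / a ≤ T) {N : ℕ}
    (j : Fin N) : 2 * π * j / (a * N) ∈ Set.Icc 0 T := by
  have hN : (0 : ℝ) < N := by exact_mod_cast j.pos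
  have hj : (j : ℝ) / N ≤ 1 := (div_le_one hN).2 (by exact_mod_cast j.isLt.le)
  refine ⟨by positivity, ?_⟩
  calc 2 * π * j / (a * N) = 2 * π / a * (j / N) := by field_simp
    _ ≤ 2 * π / a := mul_le_of_le_one_right (by positivity) hj
    _ ≤ T := hT

/-- Kolmogorov-width lower bound for transport: the snapshots of
`u(x,t) = ∑_k û₀(k) e^{ik(x-at)}` over a full period `T ≥ 2π/a` cannot all be approximated
within `ε` in `L²` (identified with `ℓ²` of Fourier coefficients) by an `n`-dimensional
linear subspace unless `n` is at least the number of modes with `c|k|^{-s} > ε`, i.e.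
`n ≥ (c/ε)^{1/s} - 1`. Here `|û₀(k)| ≥ c|k|^{-s}` for `0 < |k| ≤ K` and all such relevant
modes satisfy `|k| ≤ K`. -/
theorem stmt13 (a c s ε T : ℝ) (K : ℕ)
    (ha : 0 < a) (hc : 0 < c) (hs : 0 < s) (hε : 0 < ε)
    (hT : 2 * Real.pi / a ≤ T)
    (b : ℤ → ℂ)
    (hb : ∀ k : ℤ, k ≠ 0 → |k| ≤ (K : ℤ) →
      c * |((k : ℤ) : ℝ)| ^ (-s) ≤ ‖b k‖)
    (hK : (c / ε) ^ (1 / s) ≤ (K : ℝ))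
    (n : ℕ) (W : Fin n → ℤ → ℂ)
    (happrox : ∀ t ∈ Set.Icc (0 : ℝ) T, ∃ γ : Fin n → ℂ,
      ∀ J : Finset ℤ, ∑ k ∈ J,
        ‖b k * Complex.exp (-Complex.I * (k : ℂ) * (a : ℂ) * (t : ℂ))
          - ∑ i, γ i * W i k‖ ^ 2 ≤ ε ^ 2) :
    (c / ε) ^ (1 / s) - 1 ≤ (n : ℝ) := by
  by_contra! hn
  replace hn : (n : ℝ) + 1 < (c / ε) ^ (1 / s) := by linarith
  let f : Fin (n + 1) → ℤ := fun m => m + 1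
  have hf : ∀ m m', ((n + 1 : ℕ) : ℤ) ∣ f m - f m' → m = m' := fun m m' h =>
    Fin.eq_of_natCast_dvd_sub (by simpa [f] using h)
  have hmodes : ∀ m, ε < ‖b (f m)‖ := fun m => by
    refine lt_norm_of_mul_abs_rpow_neg_le hc hs hε hb hK (by simp only [f]; omega)
      (lt_of_le_of_lt ?_ hn)
    have : (m : ℝ) + 1 ≤ n + 1 := by exact_mod_cast m.isLt
    simp only [f]; push_cast; linarith
  have hV : Submodule.span ℂ (Set.range fun i => modeRestriction f (W i)) = ⊤ := by
    refine Submodule.eq_top_of_forall_exists_norm_sub_le _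
      (fun u hu => exists_sample_lt_norm_inner_transportSnapshot n.succ_pos hf ha.ne' hε.le
        hmodes hu) fun j => ?_
    obtain ⟨γ, hγ⟩ := happrox _ (two_pi_mul_div_mem_Icc ha hT j)
    exact exists_mem_span_modeRestriction_norm_sub_le
      (fun m m' h => hf m m' (by rw [h, sub_self]; exact dvd_zero _)) W hε.le hγ
  have hdim := finrank_le_of_span_eq_top hV
  rw [finrank_euclideanSpace, Fintype.card_fin, Fintype.card_fin] at hdim
  omega
end
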